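/- Let Λ be a supercommutative ring and A = Λ[z,θ,ρ] with z even, θ, ρ odd. Let τ: Λ[z,θ] → A be τ(h) = h − θ∂_θh + ρ(θ∂_zh + ∂_θh), and let ∇̂_ρ = ∂_ρ − θ∂_z. Then for all h ∈ Λ[z,θ]: (1) ∂_z ∘ τ = τ ∘ ∂_z; (2) ∇̂_ρ(τ(h)) = τ(∂_θ h). That is, τ intertwines the derivative ∂_z with ∂_u and the derivative ∂_θ with ∂_ρ in dual coordinates. -/

import Mathlib

open Polynomial

noncomputable section

/-- The polynomial superalgebra `Λ[z,θ,ρ]` (`z` even, `θ, ρ` odd):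
an element `a + θb + ρc + θρd` is encoded by its components
`(a, b, c, d)` with `a, b, c, d ∈ Λ[z]`. -/
abbrev A4 (Λ : Type*) [CommRing Λ] :=
  Polynomial Λ × Polynomial Λ × Polynomial Λ × Polynomial Λ

variable {Λ : Type*} [CommRing Λ]

/-- Supercommutative multiplication on `Λ[z,θ,ρ]` (θ² = ρ² = 0, θρ = −ρθ). -/
def mulA (x y : A4 Λ) : A4 Λ :=
  (x.1 * y.1,
   x.1 * y.2.1 + x.2.1 * y.1,
   x.1 * y.2.2.1 + x.2.2.1 * y.1,
   x.1 * y.2.2.2 + x.2.2.2 * y.1 + x.2.1 * y.2.2.1 - x.2.2.1 * y.2.1)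

/-- The identity `1`. -/
def oneA : A4 Λ := (1, 0, 0, 0)
/-- The even coordinate `z`. -/
def zA : A4 Λ := (Polynomial.X, 0, 0, 0)
/-- The odd coordinate `θ`. -/
def thA : A4 Λ := (0, 1, 0, 0)
/-- The odd coordinate `ρ`. -/
def rhA : A4 Λ := (0, 0, 1, 0)
/-- The inclusion of `Λ[z,θ]` (pairs `(f,g)` encoding `f + θg`) into `Λ[z,θ,ρ]`. -/
def emb (f g : Polynomial Λ) : A4 Λ := (f, g, 0, 0)

/-- The even derivation `∂_z`. -/
def dZ (x : A4 Λ) : A4 Λ :=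
  (derivative x.1, derivative x.2.1, derivative x.2.2.1, derivative x.2.2.2)
/-- The odd derivation `∂_θ`. -/
def dTheta (x : A4 Λ) : A4 Λ := (x.2.1, 0, x.2.2.2, 0)
/-- The odd derivation `∂_ρ`. -/
def dRho (x : A4 Λ) : A4 Λ := (x.2.2.1, -x.2.2.2, 0, 0)
/-- The odd vector field `D = ρ∂_z + ∂_θ`. -/
def Dop (x : A4 Λ) : A4 Λ := mulA rhA (dZ x) + dTheta x

/-- `τ(h) = h − θ∂_θh + ρ(θ∂_zh + ∂_θh)` on `Λ[z,θ]` (pairs `(f,g)` = `f + θg`). -/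
def tau (f g : Polynomial Λ) : A4 Λ :=
  emb f g - mulA thA (dTheta (emb f g))
    + mulA rhA (mulA thA (dZ (emb f g)) + dTheta (emb f g))

/-- `∇̂_ρ = ∂_ρ − θ∂_z`. -/
def hatRho (x : A4 Λ) : A4 Λ := dRho x - mulA thA (dZ x)

/-! In the dual coordinates `u = z − θρ`, `ρ`, `θ`, the map `τ` sends `f + θg` to
`f(u) + ρ g(u) = f + ρg − θρ f'`. Since `∂_z u = 1` and `∇̂_ρ u = 0` (`∇̂_ρ` is `∂_ρ` at fixed `u`),
`∂_z` acts on `τ(h)` through `f, g` alone, while `∇̂_ρ` only strips the `ρ`, leaving `g(u) = τ(g)`. -/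

theorem tau_eq_mk (f g : Polynomial Λ) : tau f g = (f, 0, g, -derivative f) := by
  simp [tau, emb, mulA, thA, rhA, dZ, dTheta]

theorem dZ_mk (a b c d : Polynomial Λ) :
    dZ (a, b, c, d) = (derivative a, derivative b, derivative c, derivative d) :=
  rfl

theorem hatRho_mk (a b c d : Polynomial Λ) :
    hatRho (a, b, c, d) = (c, -d - derivative a, 0, -derivative c) := by
  simp [hatRho, dRho, mulA, thA, dZ, sub_eq_add_neg]

theorem dZ_tau (f g : Polynomial Λ) :
    dZ (tau f g) = tau (derivative f) (derivative g) := by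
  simp only [tau_eq_mk, dZ_mk, derivative_neg, map_zero]

theorem hatRho_tau (f g : Polynomial Λ) : hatRho (tau f g) = tau g 0 := by
  simp only [tau_eq_mk, hatRho_mk, neg_neg, sub_self]

/-- `τ` intertwines `∂_z` with `∂_u = ∂_z` and `∂_θ` with
`∂_ρ` in dual coordinates: `∂_z(τ(h)) = τ(∂_zh)` and `∇̂_ρ(τ(h)) = τ(∂_θh)`
(for `h = f + θg`, `∂_θh = g`). -/
theorem stmt_11 (f g : Polynomial Λ) :
    dZ (tau f g) = tau (derivative f) (derivative g) ∧
    hatRho (tau f g) = tau g 0 :=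
  ⟨dZ_tau f g, hatRho_tau f g⟩
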